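/- arXiv:0908.2942 — 5 statements merged into one kernel-verified Lean document; each statement's English description precedes it below -/
import Mathlib

section
/- Let A : ℝ → Matrix (n×n, ℝ) be differentiable at t₀ with A(t) symmetric for all t in a neighborhood of t₀, and let λ : ℝ → ℝ and u : ℝ → ℝⁿ be differentiable at t₀ and satisfy A(t)·u(t) = λ(t)·u(t) and ‖u(t)‖ = 1 for all t in a neighborhood of t₀. Then λ′(t₀) = ⟨u(t₀), A′(t₀)·u(t₀)⟩. -/
/-!
Near `t₀` the eigenvalue is the Rayleigh quotient `λ(t) = ⟨u(t), A(t) u(t)⟩`. Differentiating,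
`λ' = ⟨u', A u⟩ + ⟨u, A' u⟩ + ⟨u, A u'⟩`; by symmetry of `A(t₀)` both terms containing `u'` equal
`λ ⟨u, u'⟩`, which vanishes because `‖u‖` is constant.
-/

open scoped InnerProductSpace

attribute [local instance] Matrix.normedAddCommGroup Matrix.normedSpace

section InnerProductSpace

variable {E : Type*} [NormedAddCommGroup E] [InnerProductSpace ℝ E]

theorem HasDerivAt.inner_eq_zero_of_eventually_norm_eq {u : ℝ → E} {u' : E} {t₀ c : ℝ}
    (hu : HasDerivAt u u' t₀) (hnorm : ∀ᶠ t in nhds t₀, ‖u t‖ = c) :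
    ⟪u t₀, u'⟫_ℝ = 0 := by
  have hconst : (‖u ·‖ ^ 2) =ᶠ[nhds t₀] fun _ => c ^ 2 := by
    filter_upwards [hnorm] with t ht
    rw [ht]
  simpa using (hu.norm_sq.congr_of_eventuallyEq hconst.symm).unique (hasDerivAt_const t₀ (c ^ 2))

theorem eigenvalue_deriv_eq_inner_of_isSymmetric {T : ℝ → E →L[ℝ] E} {T' : E →L[ℝ] E}
    {lam : ℝ → ℝ} {lam' : ℝ} {u : ℝ → E} {u' : E} {t₀ : ℝ}
    (hT : HasDerivAt T T' t₀) (hsymm : (T t₀ : E →ₗ[ℝ] E).IsSymmetric)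
    (hlam : HasDerivAt lam lam' t₀) (hu : HasDerivAt u u' t₀)
    (heig : ∀ᶠ t in nhds t₀, T t (u t) = lam t • u t)
    (hnorm : ∀ᶠ t in nhds t₀, ‖u t‖ = 1) :
    lam' = ⟪u t₀, T' (u t₀)⟫_ℝ := by
  have horth : ⟪u t₀, u'⟫_ℝ = 0 := hu.inner_eq_zero_of_eventually_norm_eq hnorm
  have hrayleigh : (fun t => ⟪u t, T t (u t)⟫_ℝ) =ᶠ[nhds t₀] lam := by
    filter_upwards [heig, hnorm] with t ht hn
    rw [ht, real_inner_smul_right, real_inner_self_eq_norm_sq, hn, one_pow, mul_one]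
  have hderiv := (hu.inner ℝ (hT.clm_apply hu)).congr_of_eventuallyEq hrayleigh.symm
  have heig₀ : T t₀ (u t₀) = lam t₀ • u t₀ := heig.self_of_nhds
  have hswap : ⟪u t₀, T t₀ u'⟫_ℝ = lam t₀ * ⟪u t₀, u'⟫_ℝ := by
    have h := hsymm (u t₀) u'
    rw [ContinuousLinearMap.coe_coe] at h
    rw [← h, heig₀, real_inner_smul_left]
  rw [hlam.unique hderiv, inner_add_right, hswap, heig₀, real_inner_smul_right,
    real_inner_comm (u t₀) u', horth]
  ring

end InnerProductSpace

theorem Matrix.hasDerivAt_toEuclideanCLM {n : Type*} [Fintype n] [DecidableEq n]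
    {A : ℝ → Matrix n n ℝ} {A' : Matrix n n ℝ} {t : ℝ} (hA : HasDerivAt A A' t) :
    HasDerivAt (fun t => toEuclideanCLM (𝕜 := ℝ) (A t)) (toEuclideanCLM (𝕜 := ℝ) A') t :=
  let L : Matrix n n ℝ →ₗ[ℝ] EuclideanSpace ℝ n →L[ℝ] EuclideanSpace ℝ n :=
    (toEuclideanCLM (n := n) (𝕜 := ℝ) : Matrix n n ℝ →ₐ[ℝ] _).toLinearMap
  (LinearMap.toContinuousLinearMap L).hasFDerivAt.comp_hasDerivAt t hA

/-- First-order perturbation formula: `λ′(t₀) = ⟨u(t₀), A′(t₀)·u(t₀)⟩`. -/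
theorem stmt_1 (n : ℕ) (A : ℝ → Matrix (Fin n) (Fin n) ℝ)
    (A' : Matrix (Fin n) (Fin n) ℝ) (lam : ℝ → ℝ) (lam' : ℝ)
    (u : ℝ → EuclideanSpace ℝ (Fin n)) (u' : EuclideanSpace ℝ (Fin n)) (t₀ : ℝ)
    (hA : HasDerivAt A A' t₀)
    (hsymm : ∀ᶠ t in nhds t₀, (A t).IsSymm)
    (hlam : HasDerivAt lam lam' t₀)
    (hu : HasDerivAt u u' t₀)
    (heig : ∀ᶠ t in nhds t₀, (A t).mulVec (u t) = lam t • u t)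
    (hnorm : ∀ᶠ t in nhds t₀, ‖u t‖ = 1) :
    lam' = ⟪u t₀, WithLp.toLp 2 (A'.mulVec (u t₀))⟫_ℝ := by
  refine eigenvalue_deriv_eq_inner_of_isSymmetric (Matrix.hasDerivAt_toEuclideanCLM hA) ?_
    hlam hu ?_ hnorm
  · rw [Matrix.coe_toEuclideanCLM_eq_toEuclideanLin, Matrix.isSymmetric_toEuclideanLin_iff,
      Matrix.isHermitian_iff_isSymm]
    exact hsymm.self_of_nhds
  · filter_upwards [heig] with t ht
    exact WithLp.ofLp_injective 2 ht
end

section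
/- Let A : ℝ → Matrix (n×n, ℝ) be twice differentiable at t₀ with A(t) symmetric for all t in a neighborhood of t₀, and let λ : ℝ → ℝ and u : ℝ → ℝⁿ be twice differentiable at t₀ and satisfy A(t)·u(t) = λ(t)·u(t) and ‖u(t)‖ = 1 for all t in a neighborhood of t₀. Then λ″(t₀) = ⟨u(t₀), A″(t₀)·u(t₀)⟩ + ⟨u(t₀), A′(t₀)·u′(t₀)⟩ + ⟨u′(t₀), A′(t₀)·u(t₀)⟩. -/
open scoped InnerProductSpace

/-!
On a neighbourhood of `t₀` the eigenvalue is the Rayleigh quotient `λ = ⟨u, A u⟩`. Differentiating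
it, the terms `⟨u′, A u⟩` and `⟨u, A u′⟩ = ⟨A u, u′⟩` are multiples of `⟨u, u′⟩ = 0` (as `‖u‖ = 1`),
which gives the Hellmann–Feynman formula `λ′ = ⟨u, A′ u⟩` near `t₀`. Differentiating that formula
once more at `t₀` is the identity.
-/

open Filter Topology Matrix

theorem HasDerivAt.inner_eq_zero_of_eventually_norm_eq_s4 {F : Type*} [NormedAddCommGroup F]
    [InnerProductSpace ℝ F] {f : ℝ → F} {f' : F} {t c : ℝ} (hf : HasDerivAt f f' t)
    (hc : ∀ᶠ s in 𝓝 t, ‖f s‖ = c) : ⟪f t, f'⟫_ℝ = 0 := by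
  have hconst : HasDerivAt (‖f ·‖ ^ 2) 0 t :=
    (hasDerivAt_const t (c ^ 2)).congr_of_eventuallyEq (by filter_upwards [hc] with s hs; rw [hs])
  simpa using hf.norm_sq.unique hconst

theorem HasDerivAt.matrix_mulVec {m n : Type*} [Fintype m] [Fintype n]
    {M : ℝ → Matrix m n ℝ} {M' : Matrix m n ℝ} {y : ℝ → n → ℝ} {y' : n → ℝ} {t : ℝ}
    (hM : HasDerivAt M M' t) (hy : HasDerivAt y y' t) :
    HasDerivAt (fun s => M s *ᵥ y s) (M' *ᵥ y t + M t *ᵥ y') t := by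
  refine hasDerivAt_pi.2 fun i => ?_
  simp only [Pi.add_apply, mulVec, dotProduct, ← Finset.sum_add_distrib]
  exact HasDerivAt.fun_sum fun j _ =>
    (hasDerivAt_pi.1 (hasDerivAt_pi.1 hM i) j).mul (hasDerivAt_pi.1 hy j)

theorem hasDerivAt_inner_toLp_mulVec {m n : Type*} [Fintype m] [Fintype n]
    {M : ℝ → Matrix m n ℝ} {M' : Matrix m n ℝ} {x : ℝ → EuclideanSpace ℝ m} {x' : EuclideanSpace ℝ m}
    {y : ℝ → EuclideanSpace ℝ n} {y' : EuclideanSpace ℝ n} {t : ℝ}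
    (hM : HasDerivAt M M' t) (hx : HasDerivAt x x' t) (hy : HasDerivAt y y' t) :
    HasDerivAt (fun s => ⟪x s, WithLp.toLp 2 (M s *ᵥ y s)⟫_ℝ)
      (⟪x t, WithLp.toLp 2 (M' *ᵥ y t)⟫_ℝ + ⟪x t, WithLp.toLp 2 (M t *ᵥ y')⟫_ℝ
        + ⟪x', WithLp.toLp 2 (M t *ᵥ y t)⟫_ℝ) t := by
  have hy₀ : HasDerivAt (fun s => (y s).ofLp) y'.ofLp t :=
    (PiLp.hasFDerivAt_ofLp 2 (y t)).comp_hasDerivAt t hy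
  have hMy := (PiLp.hasFDerivAt_toLp (𝕜 := ℝ) 2 _).comp_hasDerivAt t (hM.matrix_mulVec hy₀)
  simpa [inner_add_right] using hx.inner ℝ hMy

variable {ι : Type*} [Fintype ι]

theorem Matrix.IsSymm.inner_toLp_mulVec {M : Matrix ι ι ℝ} (hM : M.IsSymm)
    (x y : EuclideanSpace ℝ ι) :
    ⟪x, WithLp.toLp 2 (M *ᵥ y)⟫_ℝ = ⟪WithLp.toLp 2 (M *ᵥ x), y⟫_ℝ := by
  simp only [EuclideanSpace.inner_eq_star_dotProduct, star_trivial]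
  rw [dotProduct_mulVec, ← hM.eq, vecMul_transpose, hM.eq, dotProduct_comm]

theorem hasDerivAt_eigenvalue_of_isSymm {A : ℝ → Matrix ι ι ℝ} {A' : Matrix ι ι ℝ} {lam : ℝ → ℝ}
    {u : ℝ → EuclideanSpace ℝ ι} {u' : EuclideanSpace ℝ ι} {t : ℝ}
    (hA : HasDerivAt A A' t) (hu : HasDerivAt u u' t) (hsymm : (A t).IsSymm)
    (heig : ∀ᶠ s in 𝓝 t, A s *ᵥ u s = lam s • u s) (hnorm : ∀ᶠ s in 𝓝 t, ‖u s‖ = 1) :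
    HasDerivAt lam ⟪u t, WithLp.toLp 2 (A' *ᵥ u t)⟫_ℝ t := by
  have hrayleigh : lam =ᶠ[𝓝 t] fun s => ⟪u s, WithLp.toLp 2 (A s *ᵥ u s)⟫_ℝ := by
    filter_upwards [heig, hnorm] with s hs hns
    simp [hs, real_inner_smul_right, hns]
  have horth : ⟪u t, u'⟫_ℝ = 0 := hu.inner_eq_zero_of_eventually_norm_eq_s4 hnorm
  have heig_t : WithLp.toLp 2 (A t *ᵥ u t) = lam t • u t := by simp [heig.self_of_nhds]
  have hd := (hasDerivAt_inner_toLp_mulVec hA hu hu).congr_of_eventuallyEq hrayleigh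
  rwa [hsymm.inner_toLp_mulVec, heig_t, real_inner_smul_left, real_inner_smul_right,
    real_inner_comm (u t) u', horth, mul_zero, add_zero, add_zero] at hd

theorem stmt_4_general (n : ℕ) (A : ℝ → Matrix (Fin n) (Fin n) ℝ)
    (A' : ℝ → Matrix (Fin n) (Fin n) ℝ) (A'' : Matrix (Fin n) (Fin n) ℝ)
    (lam lam' : ℝ → ℝ) (lam'' : ℝ)
    (u u' : ℝ → EuclideanSpace ℝ (Fin n)) (t₀ : ℝ)
    (hA : ∀ᶠ t in nhds t₀, HasDerivAt A (A' t) t)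
    (hA' : HasDerivAt A' A'' t₀)
    (hsymm : ∀ᶠ t in nhds t₀, (A t).IsSymm)
    (hlam : ∀ᶠ t in nhds t₀, HasDerivAt lam (lam' t) t)
    (hlam' : HasDerivAt lam' lam'' t₀)
    (hu : ∀ᶠ t in nhds t₀, HasDerivAt u (u' t) t)
    (heig : ∀ᶠ t in nhds t₀, (A t).mulVec (u t) = lam t • u t)
    (hnorm : ∀ᶠ t in nhds t₀, ‖u t‖ = 1) :
    lam'' = ⟪u t₀, WithLp.toLp 2 (A''.mulVec (u t₀))⟫_ℝ + ⟪u t₀, WithLp.toLp 2 ((A' t₀).mulVec (u' t₀))⟫_ℝ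
      + ⟪u' t₀, WithLp.toLp 2 ((A' t₀).mulVec (u t₀))⟫_ℝ := by
  have hfirst : lam' =ᶠ[𝓝 t₀] fun t => ⟪u t, WithLp.toLp 2 (A' t *ᵥ u t)⟫_ℝ := by
    filter_upwards [hA, hu, hlam, hsymm, heig.eventually_nhds, hnorm.eventually_nhds]
      with t hAt hut hlamt hsymmt heigt hnormt
    exact hlamt.unique (hasDerivAt_eigenvalue_of_isSymm hAt hut hsymmt heigt hnormt)
  have hut₀ : HasDerivAt u (u' t₀) t₀ := hu.self_of_nhds
  exact hlam'.unique ((hasDerivAt_inner_toLp_mulVec hA' hut₀ hut₀).congr_of_eventuallyEq hfirst)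

/-- Second-derivative identity
`λ″(t₀) = ⟨u, A″u⟩ + ⟨u, A′u′⟩ + ⟨u′, A′u⟩` (all evaluated at `t₀`). -/
theorem stmt_4 (n : ℕ) (A : ℝ → Matrix (Fin n) (Fin n) ℝ)
    (A' : ℝ → Matrix (Fin n) (Fin n) ℝ) (A'' : Matrix (Fin n) (Fin n) ℝ)
    (lam lam' : ℝ → ℝ) (lam'' : ℝ)
    (u u' : ℝ → EuclideanSpace ℝ (Fin n)) (u'' : EuclideanSpace ℝ (Fin n)) (t₀ : ℝ)
    (hA : ∀ᶠ t in nhds t₀, HasDerivAt A (A' t) t)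
    (hA' : HasDerivAt A' A'' t₀)
    (hsymm : ∀ᶠ t in nhds t₀, (A t).IsSymm)
    (hlam : ∀ᶠ t in nhds t₀, HasDerivAt lam (lam' t) t)
    (hlam' : HasDerivAt lam' lam'' t₀)
    (hu : ∀ᶠ t in nhds t₀, HasDerivAt u (u' t) t)
    (hu' : HasDerivAt u' u'' t₀)
    (heig : ∀ᶠ t in nhds t₀, (A t).mulVec (u t) = lam t • u t)
    (hnorm : ∀ᶠ t in nhds t₀, ‖u t‖ = 1) :
    lam'' = ⟪u t₀, WithLp.toLp 2 (A''.mulVec (u t₀))⟫_ℝ + ⟪u t₀, WithLp.toLp 2 ((A' t₀).mulVec (u' t₀))⟫_ℝ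
      + ⟪u' t₀, WithLp.toLp 2 ((A' t₀).mulVec (u t₀))⟫_ℝ :=
  stmt_4_general n A A' A'' lam lam' lam'' u u' t₀ hA hA' hsymm hlam hlam' hu heig hnorm
end

section
/- Let B₁ and B₂ be 2×2 real symmetric matrices having no nonzero common eigenvector (there is no v ≠ 0 that is simultaneously an eigenvector of B₁ and of B₂). Define A : ℝ → Matrix (2×2, ℝ) by A(t) = t³·B₁ for t ≥ 0 and A(t) = t³·B₂ for t < 0. Then: (a) A is continuously differentiable on ℝ; and (b) there is no continuous function u : ℝ → ℝ² with ‖u(t)‖ = 1 for all t such that for every t there exists c ∈ ℝ with A(t)·u(t) = c·u(t). -/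
/-!
Writing `A(t) = ½(t³ + |t|³) B₁ + ½(t³ - |t|³) B₂` shows that `A` is `C¹`, since `t ↦ |t|³` is.
For a unit eigenvector `v` of `B` the eigenvalue is `v ⬝ᵥ B v`, so "`u t` is an eigenvector of `B`"
is an equation between continuous functions of `t`. It holds for `B₁` on `t > 0` and for `B₂` on
`t < 0`, hence for both at `t = 0`, making `u 0` a common eigenvector.
-/

open Set Matrix

attribute [local instance] Matrix.normedAddCommGroup Matrix.normedSpace

theorem contDiff_abs_pow_three : ContDiff ℝ 1 fun t : ℝ => |t| ^ 3 := by
  convert contDiff_norm_rpow (E := ℝ) (p := 3) (by norm_num) using 2 with t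
  rw [Real.norm_eq_abs, ← Real.rpow_natCast, Nat.cast_ofNat]

theorem contDiff_ite_pow_three_smul {E : Type*} [NormedAddCommGroup E] [NormedSpace ℝ E]
    (x y : E) : ContDiff ℝ 1 fun t : ℝ => if 0 ≤ t then t ^ 3 • x else t ^ 3 • y := by
  have hsplit : (fun t : ℝ => if 0 ≤ t then t ^ 3 • x else t ^ 3 • y) =
      fun t => ((t ^ 3 + |t| ^ 3) / 2) • x + ((t ^ 3 - |t| ^ 3) / 2) • y := by
    funext t
    split_ifs with ht
    · rw [abs_of_nonneg ht]
      simp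
    · rw [abs_of_neg (not_le.mp ht)]
      ring_nf
      simp
  rw [hsplit]
  have habs := contDiff_abs_pow_three
  fun_prop

theorem Matrix.exists_mulVec_eq_smul_of_smul {n R : Type*} [Fintype n] [Field R]
    {a : R} (ha : a ≠ 0) {B : Matrix n n R} {v : n → R}
    (h : ∃ c : R, (a • B) *ᵥ v = c • v) : ∃ c : R, B *ᵥ v = c • v := by
  obtain ⟨c, hc⟩ := h
  refine ⟨a⁻¹ * c, ?_⟩
  rw [Matrix.smul_mulVec] at hc
  rw [mul_smul, ← hc, inv_smul_smul₀ ha]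

theorem Matrix.eq_dotProduct_smul_of_eq_smul {n R : Type*} [Fintype n] [CommSemiring R]
    {v w : n → R} (hv : v ⬝ᵥ v = 1) {c : R} (h : w = c • v) : w = (v ⬝ᵥ w) • v := by
  rw [h, dotProduct_smul, hv, smul_eq_mul, mul_one]

theorem exists_mulVec_eq_smul_of_mem_closure {X n : Type*} [TopologicalSpace X] [Fintype n]
    (B : Matrix n n ℝ) {u : X → EuclideanSpace ℝ n} (hu : Continuous u)
    (hnorm : ∀ x, ‖u x‖ = 1) {s : Set X} (hs : ∀ x ∈ s, ∃ c : ℝ, B *ᵥ u x = c • u x)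
    {x : X} (hx : x ∈ closure s) : ∃ c : ℝ, B *ᵥ u x = c • u x := by
  have hunit : ∀ x, (u x).ofLp ⬝ᵥ (u x).ofLp = 1 := fun x => by
    have h := real_inner_self_eq_norm_sq (u x)
    rwa [EuclideanSpace.inner_eq_star_dotProduct, star_trivial, hnorm, one_pow] at h
  have hcont : Continuous fun x => (u x).ofLp := (PiLp.continuous_ofLp 2 _).comp hu
  have hBcont : Continuous fun x => B *ᵥ (u x).ofLp := continuous_const.matrix_mulVec hcont
  have heq : EqOn (fun x => B *ᵥ u x) (fun x => ((u x).ofLp ⬝ᵥ B *ᵥ u x) • (u x).ofLp) s :=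
    fun x hx => (hs x hx).elim fun _ hc => Matrix.eq_dotProduct_smul_of_eq_smul (hunit x) hc
  exact ⟨_, heq.closure hBcont ((hcont.dotProduct hBcont).smul hcont) hx⟩

theorem stmt_6_general (B₁ B₂ : Matrix (Fin 2) (Fin 2) ℝ)
    (hcommon : ¬ ∃ v : EuclideanSpace ℝ (Fin 2), v ≠ 0 ∧
      (∃ c : ℝ, B₁.mulVec v = c • v) ∧ (∃ c : ℝ, B₂.mulVec v = c • v))
    (A : ℝ → Matrix (Fin 2) (Fin 2) ℝ)
    (hA : A = fun t => if 0 ≤ t then t ^ 3 • B₁ else t ^ 3 • B₂) :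
    ContDiff ℝ 1 A ∧
      ¬ ∃ u : ℝ → EuclideanSpace ℝ (Fin 2), Continuous u ∧ (∀ t, ‖u t‖ = 1) ∧
        ∀ t, ∃ c : ℝ, (A t).mulVec (u t) = c • u t := by
  subst hA
  refine ⟨contDiff_ite_pow_three_smul B₁ B₂, ?_⟩
  rintro ⟨u, hu, hnorm, heig⟩
  have hpos : ∀ t ∈ Ioi (0 : ℝ), ∃ c : ℝ, B₁ *ᵥ u t = c • u t := fun t ht => by
    have h := heig t
    simp only [if_pos (le_of_lt (mem_Ioi.mp ht))] at h
    exact Matrix.exists_mulVec_eq_smul_of_smul (pow_ne_zero 3 (ne_of_gt ht)) h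
  have hneg : ∀ t ∈ Iio (0 : ℝ), ∃ c : ℝ, B₂ *ᵥ u t = c • u t := fun t ht => by
    have h := heig t
    simp only [if_neg (not_le.mpr (mem_Iio.mp ht))] at h
    exact Matrix.exists_mulVec_eq_smul_of_smul (pow_ne_zero 3 (ne_of_lt ht)) h
  refine hcommon ⟨u 0, fun h => by simpa [h] using hnorm 0, ?_, ?_⟩
  · exact exists_mulVec_eq_smul_of_mem_closure B₁ hu hnorm hpos (by simp [closure_Ioi])
  · exact exists_mulVec_eq_smul_of_mem_closure B₂ hu hnorm hneg (by simp [closure_Iio])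

/-- The family `A(t) = t³B₁` for `t ≥ 0`, `A(t) = t³B₂` for `t < 0` is continuously
differentiable, but if `B₁` and `B₂` have no nonzero common eigenvector then there is no
continuous unit-norm family of eigenvectors `u(t)` of `A(t)`. -/
theorem stmt_6 (B₁ B₂ : Matrix (Fin 2) (Fin 2) ℝ)
    (hB₁ : B₁.IsSymm) (hB₂ : B₂.IsSymm)
    (hcommon : ¬ ∃ v : EuclideanSpace ℝ (Fin 2), v ≠ 0 ∧
      (∃ c : ℝ, B₁.mulVec v = c • v) ∧ (∃ c : ℝ, B₂.mulVec v = c • v))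
    (A : ℝ → Matrix (Fin 2) (Fin 2) ℝ)
    (hA : A = fun t => if 0 ≤ t then t ^ 3 • B₁ else t ^ 3 • B₂) :
    ContDiff ℝ 1 A ∧
      ¬ ∃ u : ℝ → EuclideanSpace ℝ (Fin 2), Continuous u ∧ (∀ t, ‖u t‖ = 1) ∧
        ∀ t, ∃ c : ℝ, (A t).mulVec (u t) = c • u t :=
  stmt_6_general B₁ B₂ hcommon A hA
end

section
/- Let A : ℝ → Matrix (n×n, ℝ) be continuously differentiable with A(t) symmetric for every t. Let λ₀ be an eigenvalue of A(t₀) whose eigenspace { v : A(t₀)·v = λ₀·v } is one-dimensional, and let v₀ be a unit eigenvector for λ₀. Then there exist ε > 0 and continuously differentiable functions λ : (t₀−ε, t₀+ε) → ℝ and u : (t₀−ε, t₀+ε) → ℝⁿ such that A(t)·u(t) = λ(t)·u(t) and ‖u(t)‖ = 1 for all t ∈ (t₀−ε, t₀+ε), with λ(t₀) = λ₀ and u(t₀) = v₀. -/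
attribute [local instance] Matrix.normedAddCommGroup Matrix.normedSpace

open Set

/-!
Implicit function theorem. Eigenpairs `(v, μ)` of `T p` normalised by `⟪v₀, v⟫ = ‖v₀‖²` are the
level set through `(p₀, v₀, μ₀)` of `(p, v, μ) ↦ (T p v - μ v, ⟪v₀, v⟫)`. Its partial derivative
in `(v, μ)` is the bordered operator `(w, ν) ↦ (T p₀ w - μ₀ w - ν v₀, ⟪v₀, w⟫)`, which is injective,
hence invertible, when `μ₀` is a simple eigenvalue of the symmetric `T p₀`: pairing with `v₀`
kills `ν`, and simplicity then kills `w`. The resulting eigenvector is then rescaled to unit length.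
-/

open Filter Topology
open scoped RealInnerProductSpace ContDiff

theorem ContinuousLinearMap.IsInvertible.of_injective {𝕜 V : Type*} [RCLike 𝕜]
    [NormedAddCommGroup V] [NormedSpace 𝕜 V] [FiniteDimensional 𝕜 V] {f : V →L[𝕜] V}
    (hf : Function.Injective f) : f.IsInvertible :=
  ⟨(LinearEquiv.ofInjectiveEndo (f : V →ₗ[𝕜] V) hf).toContinuousLinearEquiv, rfl⟩

variable {P E : Type*} [NormedAddCommGroup E] [InnerProductSpace ℝ E]

namespace ContinuousLinearMap

/-- The bordered matrix `[[S - μ, -v], [wᵀ, 0]]`. -/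
noncomputable def bordered (S : E →L[ℝ] E) (μ : ℝ) (v w : E) : E × ℝ →L[ℝ] E × ℝ :=
  ((S - μ • 1) ∘L fst ℝ E ℝ - (snd ℝ E ℝ).smulRight v).prod (innerSL ℝ w ∘L fst ℝ E ℝ)

@[simp]
theorem bordered_apply (S : E →L[ℝ] E) (μ : ℝ) (v w : E) (x : E × ℝ) :
    S.bordered μ v w x = (S x.1 - μ • x.1 - x.2 • v, ⟪w, x.1⟫) := rfl

theorem bordered_injective {S : E →L[ℝ] E} (hS : (S : E →ₗ[ℝ] E).IsSymmetric) {μ : ℝ} {v : E}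
    (hv : v ≠ 0) (hSv : S v = μ • v) (hsimple : ∀ x, S x = μ • x → ∃ c : ℝ, x = c • v) :
    Function.Injective (S.bordered μ v v) := by
  rw [injective_iff_map_eq_zero]
  rintro ⟨x, ν⟩ hx
  simp only [bordered_apply, Prod.mk_eq_zero, sub_eq_zero] at hx
  obtain ⟨hSx, hvx⟩ := hx
  have hvv : ⟪v, v⟫ ≠ 0 := inner_self_ne_zero.mpr hv
  -- pairing `S x - μ x = ν v` with the eigenvector `v` kills the left side by symmetry
  have hν : ν = 0 := by
    have hsym : ⟪v, S x⟫ = ⟪S v, x⟫ := (hS v x).symm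
    have : ⟪v, S x - μ • x⟫ = ν * ⟪v, v⟫ := by rw [hSx, inner_smul_right]
    rw [inner_sub_right, hsym, hSv, inner_smul_left, inner_smul_right, hvx] at this
    simpa [hv] using this.symm
  subst hν
  obtain ⟨c, rfl⟩ := hsimple x (sub_eq_zero.mp (by simpa using hSx))
  simp_all [inner_smul_right]

end ContinuousLinearMap

/-- On the level set through an eigenpair, `(v, μ)` is an eigenpair of `T p` and the second
component `⟪v₀, v⟫` fixes the scale of `v`. -/
def eigenEquation (T : P → E →L[ℝ] E) (v₀ : E) (x : P × (E × ℝ)) : E × ℝ :=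
  (T x.1 x.2.1 - x.2.2 • x.2.1, ⟪v₀, x.2.1⟫)

theorem contDiffAt_eigenEquation [NormedAddCommGroup P] [NormedSpace ℝ P]
    {T : P → E →L[ℝ] E} {n : ℕ∞ω} {p : P} (hT : ContDiffAt ℝ n T p) (v₀ : E) (x : E × ℝ) :
    ContDiffAt ℝ n (eigenEquation T v₀) (p, x) :=
  ContDiffAt.prodMk (by fun_prop) (contDiffAt_const.inner ℝ (by fun_prop))

theorem hasFDerivAt_eigenEquation_right (T : P → E →L[ℝ] E) (v₀ : E) (p : P) (v : E) (μ : ℝ) :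
    HasFDerivAt (fun x => eigenEquation T v₀ (p, x)) ((T p).bordered μ v v₀) (v, μ) := by
  have h1 : HasFDerivAt (fun x : E × ℝ => x.1) (.fst ℝ E ℝ) (v, μ) := hasFDerivAt_fst
  have h2 : HasFDerivAt (fun x : E × ℝ => x.2) (.snd ℝ E ℝ) (v, μ) := hasFDerivAt_snd
  refine (((T p).hasFDerivAt.comp _ h1 |>.sub (h2.smul h1)).prodMk
    ((innerSL ℝ v₀).hasFDerivAt.comp _ h1)).congr_fderiv ?_
  ext x <;> simp

variable [NormedAddCommGroup P] [NormedSpace ℝ P] [CompleteSpace P] [FiniteDimensional ℝ E]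

theorem exists_contDiffAt_eigenpair {T : P → E →L[ℝ] E} {n : ℕ∞ω} {p₀ : P}
    (hT : ContDiffAt ℝ n T p₀) (hn : n ≠ 0) (hsymm : (T p₀ : E →ₗ[ℝ] E).IsSymmetric)
    {μ₀ : ℝ} {v₀ : E} (hv₀ : v₀ ≠ 0) (hTv₀ : T p₀ v₀ = μ₀ • v₀)
    (hsimple : ∀ v, T p₀ v = μ₀ • v → ∃ c : ℝ, v = c • v₀) :
    ∃ μ : P → ℝ, ∃ u : P → E, ContDiffAt ℝ n μ p₀ ∧ ContDiffAt ℝ n u p₀ ∧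
      (∀ᶠ p in 𝓝 p₀, T p (u p) = μ p • u p) ∧ μ p₀ = μ₀ ∧ u p₀ = v₀ := by
  have hf := contDiffAt_eigenEquation hT v₀ (v₀, μ₀)
  have hpartial : fderiv ℝ (eigenEquation T v₀) (p₀, (v₀, μ₀)) ∘L .inr ℝ P (E × ℝ) =
      (T p₀).bordered μ₀ v₀ v₀ :=
    ((hf.differentiableAt hn).hasFDerivAt.comp _ (hasFDerivAt_prodMk_right p₀ _)).unique
      (hasFDerivAt_eigenEquation_right T v₀ p₀ v₀ μ₀)
  have hinv : (fderiv ℝ (eigenEquation T v₀) (p₀, (v₀, μ₀)) ∘L .inr ℝ P (E × ℝ)).IsInvertible :=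
    hpartial ▸ .of_injective (ContinuousLinearMap.bordered_injective hsymm hv₀ hTv₀ hsimple)
  set ψ := hf.implicitFunction hn hinv
  have hψ₀ : ψ p₀ = (v₀, μ₀) := hf.implicitFunction_apply_self hn hinv
  have hψ : ContDiffAt ℝ n ψ p₀ := hf.contDiffAt_implicitFunction hn hinv
  refine ⟨fun p => (ψ p).2, fun p => (ψ p).1, hψ.snd, hψ.fst, ?_, by simp [hψ₀], by simp [hψ₀]⟩
  filter_upwards [hf.eventually_apply_implicitFunction hn hinv] with p hp
  have := congrArg Prod.fst hp
  simp only [eigenEquation, hTv₀, sub_self] at this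
  exact sub_eq_zero.mp this

theorem exists_contDiffAt_unit_eigenpair {T : P → E →L[ℝ] E} {n : ℕ∞ω} {p₀ : P}
    (hT : ContDiffAt ℝ n T p₀) (hn : n ≠ 0) (hsymm : (T p₀ : E →ₗ[ℝ] E).IsSymmetric)
    {μ₀ : ℝ} {v₀ : E} (hv₀ : ‖v₀‖ = 1) (hTv₀ : T p₀ v₀ = μ₀ • v₀)
    (hsimple : ∀ v, T p₀ v = μ₀ • v → ∃ c : ℝ, v = c • v₀) :
    ∃ μ : P → ℝ, ∃ u : P → E, ContDiffAt ℝ n μ p₀ ∧ ContDiffAt ℝ n u p₀ ∧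
      (∀ᶠ p in 𝓝 p₀, T p (u p) = μ p • u p ∧ ‖u p‖ = 1) ∧ μ p₀ = μ₀ ∧ u p₀ = v₀ := by
  have hv₀ne : v₀ ≠ 0 := norm_ne_zero_iff.mp (by simp [hv₀])
  obtain ⟨μ, u, hμ, hu, heig, hμ₀, hu₀⟩ :=
    exists_contDiffAt_eigenpair hT hn hsymm hv₀ne hTv₀ hsimple
  have hune : u p₀ ≠ 0 := hu₀ ▸ hv₀ne
  refine ⟨μ, fun p => ‖u p‖⁻¹ • u p, hμ,
    ((hu.norm ℝ hune).inv (norm_ne_zero_iff.mpr hune)).smul hu, ?_, hμ₀, by simp [hu₀, hv₀]⟩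
  filter_upwards [heig, hu.continuousAt.eventually_ne hune] with p hp hp0
  simp [hp, smul_comm (μ p), norm_smul, hp0]

theorem Matrix.mulVec_eq_smul_iff_toEuclideanCLM {ι : Type*} [Fintype ι] [DecidableEq ι]
    (M : Matrix ι ι ℝ) (v : EuclideanSpace ℝ ι) (c : ℝ) :
    M.mulVec v.ofLp = c • v.ofLp ↔ Matrix.toEuclideanCLM (𝕜 := ℝ) M v = c • v := by
  rw [← (WithLp.ofLp_injective (p := 2)).eq_iff, ofLp_toEuclideanCLM, WithLp.ofLp_smul]

theorem Matrix.contDiff_toEuclideanCLM_comp {ι : Type*} [Fintype ι] [DecidableEq ι]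
    {A : ℝ → Matrix ι ι ℝ} {n : ℕ∞ω} (hA : ContDiff ℝ n A) :
    ContDiff ℝ n fun t => Matrix.toEuclideanCLM (𝕜 := ℝ) (A t) :=
  (LinearMap.toContinuousLinearMap
    (Matrix.toEuclideanCLM (n := ι) (𝕜 := ℝ)).toAlgEquiv.toLinearMap).contDiff.comp hA

/-- A simple eigenvalue of a continuously differentiable family of symmetric matrices,
together with its unit eigenvector, extends to a continuously differentiable family of
eigenpairs on a small parameter interval. -/
theorem stmt_8 (n : ℕ) (A : ℝ → Matrix (Fin n) (Fin n) ℝ)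
    (hA : ContDiff ℝ 1 A) (hsymm : ∀ t : ℝ, (A t).IsSymm)
    (t₀ lam₀ : ℝ) (v₀ : EuclideanSpace ℝ (Fin n))
    (hv₀ : (A t₀).mulVec v₀ = lam₀ • v₀) (hv₀norm : ‖v₀‖ = 1)
    (hsimple : ∀ v : EuclideanSpace ℝ (Fin n), (A t₀).mulVec v = lam₀ • v →
      ∃ c : ℝ, v = c • v₀) :
    ∃ ε > 0, ∃ lam : ℝ → ℝ, ∃ u : ℝ → EuclideanSpace ℝ (Fin n),
      ContDiffOn ℝ 1 lam (Ioo (t₀ - ε) (t₀ + ε)) ∧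
      ContDiffOn ℝ 1 u (Ioo (t₀ - ε) (t₀ + ε)) ∧
      (∀ t ∈ Ioo (t₀ - ε) (t₀ + ε), (A t).mulVec (u t) = lam t • u t ∧ ‖u t‖ = 1) ∧
      lam t₀ = lam₀ ∧ u t₀ = v₀ := by
  simp only [Matrix.mulVec_eq_smul_iff_toEuclideanCLM] at hv₀ hsimple ⊢
  have hT := Matrix.contDiff_toEuclideanCLM_comp hA
  have hsymmT : (Matrix.toEuclideanCLM (𝕜 := ℝ) (A t₀) :
      EuclideanSpace ℝ (Fin n) →ₗ[ℝ] EuclideanSpace ℝ (Fin n)).IsSymmetric :=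
    Matrix.isSymmetric_toEuclideanLin_iff.mpr (Matrix.isHermitian_iff_isSymm.mpr (hsymm t₀))
  obtain ⟨lam, u, hlam, hu, heig, hlam₀, hu₀⟩ :=
    exists_contDiffAt_unit_eigenpair hT.contDiffAt one_ne_zero hsymmT hv₀norm hv₀ hsimple
  obtain ⟨ε, hε, hball⟩ := Metric.eventually_nhds_iff_ball.mp
    ((hlam.eventually (by simp)).and ((hu.eventually (by simp)).and heig))
  rw [Real.ball_eq_Ioo] at hball
  exact ⟨ε, hε, lam, u, fun t ht => (hball t ht).1.contDiffWithinAt,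
    fun t ht => (hball t ht).2.1.contDiffWithinAt, fun t ht => (hball t ht).2.2, hlam₀, hu₀⟩
end

section
/- Let A : ℝ → Matrix (n×n, ℝ) with A(t) symmetric for every t, let λ¹, λ² : ℝ → ℝ, and let u¹, u² : ℝ → ℝⁿ be continuous with A(t)·uⁱ(t) = λⁱ(t)·uⁱ(t) and ‖uⁱ(t)‖ = 1 for all t and i = 1, 2. Suppose there exists ε > 0 such that λ¹(t) ≠ λ²(t) whenever 0 < |t − t₀| < ε. Then ⟨u¹(t₀), u²(t₀)⟩ = 0. -/
/-!
Symmetry of `A t` forces eigenvectors for distinct eigenvalues to be orthogonal, so the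
continuous function `t ↦ ⟪u₁ t, u₂ t⟫` vanishes on a punctured neighbourhood of `t₀`, hence
also at `t₀`.
-/

open scoped InnerProductSpace
open Filter Topology Matrix Module.End

theorem Matrix.IsHermitian.inner_eq_zero_of_mulVec_eq_smul {𝕜 ι : Type*} [RCLike 𝕜]
    [Fintype ι] [DecidableEq ι] {A : Matrix ι ι 𝕜} (hA : A.IsHermitian) {μ ν : 𝕜} (hμν : μ ≠ ν)
    {v w : EuclideanSpace 𝕜 ι} (hv : A *ᵥ v = μ • v) (hw : A *ᵥ w = ν • w) :
    ⟪v, w⟫_𝕜 = 0 :=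
  (isSymmetric_toEuclideanLin_iff.mpr hA).orthogonalFamily_eigenspaces hμν
    ⟨v, mem_eigenspace_iff.mpr (congrArg (WithLp.toLp 2) hv)⟩
    ⟨w, mem_eigenspace_iff.mpr (congrArg (WithLp.toLp 2) hw)⟩

theorem ContinuousAt.eq_of_eventuallyEq_nhdsNE {X Y : Type*} [TopologicalSpace X]
    [TopologicalSpace Y] [T2Space Y] {f g : X → Y} {x : X} [(𝓝[≠] x).NeBot]
    (hf : ContinuousAt f x) (hg : ContinuousAt g x) (hfg : f =ᶠ[𝓝[≠] x] g) : f x = g x :=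
  ((hf.eventuallyEq_nhds_iff_eventuallyEq_nhdsNE hg).mp hfg).eq_of_nhds

theorem stmt_9_general (n : ℕ) (A : ℝ → Matrix (Fin n) (Fin n) ℝ)
    (hsymm : ∀ t : ℝ, (A t).IsSymm)
    (lam₁ lam₂ : ℝ → ℝ) (u₁ u₂ : ℝ → EuclideanSpace ℝ (Fin n))
    (hu₁ : Continuous u₁) (hu₂ : Continuous u₂)
    (heig₁ : ∀ t : ℝ, (A t).mulVec (u₁ t) = lam₁ t • u₁ t)
    (heig₂ : ∀ t : ℝ, (A t).mulVec (u₂ t) = lam₂ t • u₂ t)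
    (t₀ : ℝ) (ε : ℝ) (hε : 0 < ε)
    (hne : ∀ t : ℝ, 0 < |t - t₀| → |t - t₀| < ε → lam₁ t ≠ lam₂ t) :
    ⟪u₁ t₀, u₂ t₀⟫_ℝ = 0 := by
  have hdistinct : ∀ᶠ t in 𝓝[≠] t₀, lam₁ t ≠ lam₂ t :=
    eventually_nhdsWithin_iff.mpr <| Metric.eventually_nhds_iff.mpr
      ⟨ε, hε, fun {t} hdist ht => hne t (abs_pos.mpr (sub_ne_zero.mpr ht)) hdist⟩
  have horth : (fun t => ⟪u₁ t, u₂ t⟫_ℝ) =ᶠ[𝓝[≠] t₀] fun _ => 0 :=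
    hdistinct.mono fun t ht =>
      (isHermitian_iff_isSymm.mpr (hsymm t)).inner_eq_zero_of_mulVec_eq_smul ht
        (heig₁ t) (heig₂ t)
  exact (hu₁.inner hu₂).continuousAt.eq_of_eventuallyEq_nhdsNE continuousAt_const horth

/-- Two continuous families of unit eigenvectors whose eigenvalues are distinct for all
`t` near (but not equal to) `t₀` are orthogonal at `t₀`. -/
theorem stmt_9 (n : ℕ) (A : ℝ → Matrix (Fin n) (Fin n) ℝ)
    (hsymm : ∀ t : ℝ, (A t).IsSymm)
    (lam₁ lam₂ : ℝ → ℝ) (u₁ u₂ : ℝ → EuclideanSpace ℝ (Fin n))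
    (hu₁ : Continuous u₁) (hu₂ : Continuous u₂)
    (heig₁ : ∀ t : ℝ, (A t).mulVec (u₁ t) = lam₁ t • u₁ t)
    (heig₂ : ∀ t : ℝ, (A t).mulVec (u₂ t) = lam₂ t • u₂ t)
    (hnorm₁ : ∀ t : ℝ, ‖u₁ t‖ = 1) (hnorm₂ : ∀ t : ℝ, ‖u₂ t‖ = 1)
    (t₀ : ℝ) (ε : ℝ) (hε : 0 < ε)
    (hne : ∀ t : ℝ, 0 < |t - t₀| → |t - t₀| < ε → lam₁ t ≠ lam₂ t) :
    ⟪u₁ t₀, u₂ t₀⟫_ℝ = 0 :=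
  stmt_9_general n A hsymm lam₁ lam₂ u₁ u₂ hu₁ hu₂ heig₁ heig₂ t₀ ε hε hne
end
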